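/- Let β ≠ −1 and β ≠ −3, and let ρ : [0,T] × 𝕋 → (0,∞) be a smooth positive solution of ∂ₜρ + ∂ₓ( ρ ∂ₓ( ∂ₓ(ρ^β ∂ₓρ) − (β/2) ρ^{β−1} |∂ₓρ|² ) ) = 0. Then for all t, d/dt ∫_𝕋 (4/((β+3)(β+1))) ρ^{(β+3)/2} dx + (4/(β+1)²) ∫_𝕋 ρ^{(β+3)/2} |∂ₓ²(ρ^{(β+1)/2})|² dx = 0. -/

import Mathlib

open scoped ContDiff
open MeasureTheory


lemma one_le_infty' : (1 : WithTop ℕ∞) ≤ ∞ := by exact_mod_cast le_top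

lemma periodic_deriv' (f : ℝ → ℝ) (hf : Function.Periodic f 1) :
    Function.Periodic (deriv f) 1 := by
  intro x
  rw [← deriv_comp_add_const f 1 x, hf.funext]

lemma ibp_per (g h : ℝ → ℝ) (hg : ContDiff ℝ ∞ g) (hh : ContDiff ℝ ∞ h)
    (pg : Function.Periodic g 1) (ph : Function.Periodic h 1) :
    ∫ x in (0:ℝ)..1, g x * deriv h x = - ∫ x in (0:ℝ)..1, deriv g x * h x := by
  have hgd := hg.differentiable (by simp)
  have hhd := hh.differentiable (by simp)
  have hg' := (contDiff_infty_iff_deriv.mp hg).2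
  have hh' := (contDiff_infty_iff_deriv.mp hh).2
  rw [intervalIntegral.integral_mul_deriv_eq_deriv_mul
      (fun x _ => (hgd x).hasDerivAt) (fun x _ => (hhd x).hasDerivAt)
      (hg'.continuous.intervalIntegrable 0 1) (hh'.continuous.intervalIntegrable 0 1),
    pg.eq, ph.eq]
  ring

lemma key_id (β : ℝ) (hβ1 : β + 1 ≠ 0) (r : ℝ → ℝ) (hr : ContDiff ℝ ∞ r)
    (hrpos : ∀ y, 0 < r y) (x : ℝ) :
    r x * deriv (fun z => deriv (fun w => r w ^ β * deriv r w) z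
        - β / 2 * r z ^ (β - 1) * (deriv r z) ^ 2) x
      = 2 / (β + 1) *
        deriv (fun y => r y ^ ((β + 3) / 2)
          * deriv (deriv (fun w => r w ^ ((β + 1) / 2))) y) x := by
  have hne : ∀ y, r y ≠ 0 := fun y => (hrpos y).ne'
  have hrd : Differentiable ℝ r := hr.differentiable (by simp)
  have hr1 : ContDiff ℝ ∞ (deriv r) := (contDiff_infty_iff_deriv.mp hr).2
  have hr1d : Differentiable ℝ (deriv r) := hr1.differentiable (by simp)
  have hr2 : ContDiff ℝ ∞ (deriv (deriv r)) := (contDiff_infty_iff_deriv.mp hr1).2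
  have hr2d : Differentiable ℝ (deriv (deriv r)) := hr2.differentiable (by simp)
  have hd0 : ∀ y, HasDerivAt r (deriv r y) y := fun y => (hrd y).hasDerivAt
  have hd1 : ∀ y, HasDerivAt (deriv r) (deriv (deriv r) y) y := fun y => (hr1d y).hasDerivAt
  have hd2 : ∀ y, HasDerivAt (deriv (deriv r)) (deriv (deriv (deriv r)) y) y :=
    fun y => (hr2d y).hasDerivAt
  have hrpc : ∀ (c : ℝ) (y : ℝ),
      HasDerivAt (fun w => r w ^ c) (deriv r y * c * r y ^ (c - 1)) y :=
    fun c y => (hd0 y).rpow_const (Or.inl (hne y))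
  -- step A : derivative of r^β * r'
  have hA : ∀ z, HasDerivAt (fun w => r w ^ β * deriv r w)
      (deriv r z * β * r z ^ (β - 1) * deriv r z + r z ^ β * deriv (deriv r) z) z :=
    fun z => (hrpc β z).mul (hd1 z)
  -- step B : rewrite G explicitly
  have hGfun : (fun z => deriv (fun w => r w ^ β * deriv r w) z
        - β / 2 * r z ^ (β - 1) * (deriv r z) ^ 2)
      = fun z => β / 2 * (r z ^ (β - 1) * (deriv r z * deriv r z))
          + r z ^ β * deriv (deriv r) z := by
    funext z
    rw [(hA z).deriv]
    ring
  have hB : HasDerivAt (fun z => β / 2 * (r z ^ (β - 1) * (deriv r z * deriv r z))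
        + r z ^ β * deriv (deriv r) z)
      (β / 2 * (deriv r x * (β - 1) * r x ^ (β - 1 - 1) * (deriv r x * deriv r x)
          + r x ^ (β - 1) * (deriv (deriv r) x * deriv r x + deriv r x * deriv (deriv r) x))
        + (deriv r x * β * r x ^ (β - 1) * deriv (deriv r) x
          + r x ^ β * deriv (deriv (deriv r)) x)) x := by
    exact HasDerivAt.add
      (HasDerivAt.const_mul (β / 2) ((hrpc (β - 1) x).mul ((hd1 x).mul (hd1 x))))
      ((hrpc β x).mul (hd2 x))
  -- step C : second derivative of u = r^((β+1)/2)
  have hu1fun : deriv (fun w => r w ^ ((β + 1) / 2))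
      = fun y => deriv r y * ((β + 1) / 2) * r y ^ ((β + 1) / 2 - 1) :=
    funext fun y => (hrpc ((β + 1) / 2) y).deriv
  have hC : ∀ y, HasDerivAt (fun w => deriv r w * ((β + 1) / 2) * r w ^ ((β + 1) / 2 - 1))
      (deriv (deriv r) y * ((β + 1) / 2) * r y ^ ((β + 1) / 2 - 1)
        + deriv r y * ((β + 1) / 2)
          * (deriv r y * ((β + 1) / 2 - 1) * r y ^ ((β + 1) / 2 - 1 - 1))) y :=
    fun y => ((hd1 y).mul_const ((β + 1) / 2)).mul (hrpc ((β + 1) / 2 - 1) y)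
  have hu2fun : deriv (deriv (fun w => r w ^ ((β + 1) / 2)))
      = fun y => deriv (deriv r) y * ((β + 1) / 2) * r y ^ ((β + 1) / 2 - 1)
        + deriv r y * ((β + 1) / 2)
          * (deriv r y * ((β + 1) / 2 - 1) * r y ^ ((β + 1) / 2 - 1 - 1)) := by
    rw [hu1fun]
    exact funext fun y => (hC y).deriv
  -- step D : rewrite H explicitly
  have hHfun : (fun y => r y ^ ((β + 3) / 2)
        * deriv (deriv (fun w => r w ^ ((β + 1) / 2))) y)
      = fun y => ((β + 1) / 2 * ((β + 1) / 2 - 1)) * (r y ^ β * (deriv r y * deriv r y))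
          + (β + 1) / 2 * (r y ^ (β + 1) * deriv (deriv r) y) := by
    funext y
    rw [hu2fun]
    have e1 : r y ^ ((β + 3) / 2) * r y ^ ((β + 1) / 2 - 1) = r y ^ (β + 1) := by
      rw [← Real.rpow_add (hrpos y), show (β + 3) / 2 + ((β + 1) / 2 - 1) = β + 1 by ring]
    have e2 : r y ^ ((β + 3) / 2) * r y ^ ((β + 1) / 2 - 1 - 1) = r y ^ β := by
      rw [← Real.rpow_add (hrpos y), show (β + 3) / 2 + ((β + 1) / 2 - 1 - 1) = β by ring]
    linear_combination (deriv (deriv r) y * ((β + 1) / 2)) * e1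
      + (deriv r y * ((β + 1) / 2) * (deriv r y * ((β + 1) / 2 - 1))) * e2
  have hD : HasDerivAt (fun y => ((β + 1) / 2 * ((β + 1) / 2 - 1))
        * (r y ^ β * (deriv r y * deriv r y))
        + (β + 1) / 2 * (r y ^ (β + 1) * deriv (deriv r) y))
      (((β + 1) / 2 * ((β + 1) / 2 - 1))
          * (deriv r x * β * r x ^ (β - 1) * (deriv r x * deriv r x)
            + r x ^ β * (deriv (deriv r) x * deriv r x + deriv r x * deriv (deriv r) x))
        + (β + 1) / 2 * (deriv r x * (β + 1) * r x ^ (β + 1 - 1) * deriv (deriv r) x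
            + r x ^ (β + 1) * deriv (deriv (deriv r)) x)) x := by
    exact HasDerivAt.add
      (HasDerivAt.const_mul _ ((hrpc β x).mul ((hd1 x).mul (hd1 x))))
      (HasDerivAt.const_mul _ ((hrpc (β + 1) x).mul (hd2 x)))
  rw [hGfun, hHfun, hB.deriv, hD.deriv]
  have hne' : r x ≠ 0 := hne x
  have E0 : r x ^ (β + 1 - 1) = r x ^ β := by rw [show β + 1 - 1 = β by ring]
  have E3 : r x ^ (β + 1) = r x ^ β * r x := Real.rpow_add_one hne' β
  have E2 : r x ^ β = r x ^ (β - 1) * r x := by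
    rw [← Real.rpow_add_one hne' (β - 1), show β - 1 + 1 = β by ring]
  have E1 : r x ^ (β - 1) = r x ^ (β - 1 - 1) * r x := by
    rw [← Real.rpow_add_one hne' (β - 1 - 1), show β - 1 - 1 + 1 = β - 1 by ring]
  rw [E0, E3, E2, E1]
  field_simp
  ring

/-- Entropy dissipation identity for the fourth-order gradient-flow equation:
`d/dt ∫ (4/((β+3)(β+1))) ρ^{(β+3)/2} + (4/(β+1)²) ∫ ρ^{(β+3)/2}|∂ₓ²(ρ^{(β+1)/2})|² = 0`. -/
theorem stmt8 (β T : ℝ) (hβ1 : β ≠ -1) (hβ3 : β ≠ -3) (hT : 0 < T)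
    (ρ : ℝ → ℝ → ℝ)
    (hρ : ContDiff ℝ (⊤ : ℕ∞) (fun p : ℝ × ℝ => ρ p.1 p.2))
    (hpos : ∀ t x, 0 < ρ t x)
    (hper : ∀ t, Function.Periodic (ρ t) 1)
    (hpde : ∀ t x, deriv (fun s => ρ s x) t +
        deriv (fun y => ρ t y *
          deriv (fun z =>
            deriv (fun w => ρ t w ^ β * deriv (ρ t) w) z
              - β / 2 * ρ t z ^ (β - 1) * (deriv (ρ t) z) ^ 2) y) x = 0) :
    ∀ t ∈ Set.Ioo 0 T,
      deriv (fun s => ∫ x in (0:ℝ)..1,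
          (4 / ((β + 3) * (β + 1))) * ρ s x ^ ((β + 3) / 2)) t
        + (4 / (β + 1) ^ 2) * ∫ x in (0:ℝ)..1,
            ρ t x ^ ((β + 3) / 2) *
              (deriv (deriv (fun y => ρ t y ^ ((β + 1) / 2))) x) ^ 2 = 0 := by
  intro t _ht
  have hβ1' : β + 1 ≠ 0 := fun h => hβ1 (by linarith)
  have hβ3' : β + 3 ≠ 0 := fun h => hβ3 (by linarith)
  have hρ' : ContDiff ℝ ∞ (fun p : ℝ × ℝ => ρ p.1 p.2) := hρ.of_le (by simp)
  have hcρ : Continuous (fun p : ℝ × ℝ => ρ p.1 p.2) := hρ'.continuous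
  -- smoothness of slices
  have hrt : ContDiff ℝ ∞ (ρ t) :=
    hρ'.comp (contDiff_const.prodMk contDiff_id)
  have hrpos : ∀ y, 0 < ρ t y := hpos t
  have hne : ∀ y, ρ t y ≠ 0 := fun y => (hrpos y).ne'
  have hu : ContDiff ℝ ∞ (fun y => ρ t y ^ ((β + 1) / 2)) := hrt.rpow_const_of_ne hne
  have hu1 : ContDiff ℝ ∞ (deriv (fun y => ρ t y ^ ((β + 1) / 2))) :=
    (contDiff_infty_iff_deriv.mp hu).2
  have hu2 : ContDiff ℝ ∞ (deriv (deriv (fun y => ρ t y ^ ((β + 1) / 2)))) :=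
    (contDiff_infty_iff_deriv.mp hu1).2
  have hv : ContDiff ℝ ∞ (fun y => ρ t y ^ ((β + 3) / 2)) := hrt.rpow_const_of_ne hne
  have hH : ContDiff ℝ ∞ (fun y => ρ t y ^ ((β + 3) / 2)
      * deriv (deriv (fun w => ρ t w ^ ((β + 1) / 2))) y) := hv.mul hu2
  have hH1 : ContDiff ℝ ∞ (deriv (fun y => ρ t y ^ ((β + 3) / 2)
      * deriv (deriv (fun w => ρ t w ^ ((β + 1) / 2))) y)) :=
    (contDiff_infty_iff_deriv.mp hH).2
  -- periodicity of slices
  have pr : Function.Periodic (ρ t) 1 := hper t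
  have pu : Function.Periodic (fun y => ρ t y ^ ((β + 1) / 2)) 1 := fun y => by
    simp [pr y]
  have pv : Function.Periodic (fun y => ρ t y ^ ((β + 3) / 2)) 1 := fun y => by
    simp [pr y]
  have pu1 := periodic_deriv' _ pu
  have pu2 := periodic_deriv' _ pu1
  have pH : Function.Periodic (fun y => ρ t y ^ ((β + 3) / 2)
      * deriv (deriv (fun w => ρ t w ^ ((β + 1) / 2))) y) 1 := pv.mul pu2
  have pH1 := periodic_deriv' _ pH
  -- time derivative of ρ in terms of the full fderiv
  have hdts : ∀ s x, HasDerivAt (fun σ => ρ σ x)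
      (fderiv ℝ (fun p : ℝ × ℝ => ρ p.1 p.2) (s, x) (1, 0)) s := by
    intro s x
    have hfd : HasFDerivAt (fun p : ℝ × ℝ => ρ p.1 p.2)
        (fderiv ℝ (fun p : ℝ × ℝ => ρ p.1 p.2) (s, x)) (s, x) :=
      (hρ'.differentiable (by simp) (s, x)).hasFDerivAt
    have hgg : HasDerivAt (fun σ : ℝ => (σ, x)) ((1 : ℝ), (0 : ℝ)) s :=
      (hasDerivAt_id s).prodMk (hasDerivAt_const s x)
    exact hfd.comp_hasDerivAt s hgg
  have hcontdt : Continuous (fun p : ℝ × ℝ =>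
      fderiv ℝ (fun q : ℝ × ℝ => ρ q.1 q.2) p ((1 : ℝ), (0 : ℝ))) :=
    (hρ.continuous_fderiv (by simp)).clm_apply continuous_const
  -- the integrand of the differentiated entropy
  set g : ℝ × ℝ → ℝ := fun p => 4 / ((β + 3) * (β + 1)) *
      (fderiv ℝ (fun q : ℝ × ℝ => ρ q.1 q.2) p ((1 : ℝ), (0 : ℝ)) * ((β + 3) / 2)
        * ρ p.1 p.2 ^ ((β + 3) / 2 - 1)) with hg_def
  have hslice : ∀ s, Continuous (fun x => ρ s x) :=
    fun s => hcρ.comp (continuous_const.prodMk continuous_id)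
  have hslice_rpow : ∀ s (c' : ℝ), Continuous (fun x => ρ s x ^ c') := fun s c' =>
    continuous_iff_continuousAt.2 fun x =>
      ((hslice s).continuousAt).rpow_const (Or.inl (hpos s x).ne')
  have hg_cont : Continuous g := by
    rw [hg_def]
    refine continuous_const.mul (((hcontdt.mul continuous_const)).mul ?_)
    exact continuous_iff_continuousAt.2 fun p =>
      (hcρ.continuousAt).rpow_const (Or.inl (hpos p.1 p.2).ne')
  -- uniform bound on a compact neighborhood
  obtain ⟨M, hM⟩ := (isCompact_Icc.prod isCompact_Icc :
      IsCompact (Set.Icc (t - 1) (t + 1) ×ˢ Set.Icc (0:ℝ) 1)).exists_bound_of_continuousOn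
    hg_cont.continuousOn
  -- differentiation under the integral sign
  obtain ⟨-, hder⟩ := intervalIntegral.hasDerivAt_integral_of_dominated_loc_of_deriv_le
    (F := fun s x => 4 / ((β + 3) * (β + 1)) * ρ s x ^ ((β + 3) / 2))
    (F' := fun s x => g (s, x)) (x₀ := t) (bound := fun _ => M) (a := 0) (b := 1)
    (μ := MeasureTheory.volume) (Metric.ball_mem_nhds t one_pos)
    (Filter.Eventually.of_forall fun s =>
      ((continuous_const.mul (hslice_rpow s _)).aestronglyMeasurable))
    ((continuous_const.mul (hslice_rpow t _)).intervalIntegrable 0 1)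
    ((hg_cont.comp (continuous_const.prodMk continuous_id)).aestronglyMeasurable)
    (Filter.Eventually.of_forall (fun x hx s (hs : s ∈ Metric.ball t 1) => by
      refine hM (s, x) ⟨?_, ?_⟩
      · rw [Metric.mem_ball, Real.dist_eq] at hs
        have := abs_lt.mp hs
        exact ⟨by linarith [this.1], by linarith [this.2]⟩
      · rw [Set.uIoc_of_le (by norm_num : (0:ℝ) ≤ 1)] at hx
        exact ⟨le_of_lt hx.1, hx.2⟩))
    (intervalIntegrable_const)
    (Filter.Eventually.of_forall (fun x _hx s _hs =>
      HasDerivAt.const_mul _ ((hdts s x).rpow_const (Or.inl (hpos s x).ne'))))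
  rw [hder.deriv]
  -- pointwise identification of the integrand
  have hg_eq : ∀ x, g (t, x) = -(4 / (β + 1) ^ 2) * (ρ t x ^ ((β + 1) / 2)
      * deriv (deriv (fun y => ρ t y ^ ((β + 3) / 2)
          * deriv (deriv (fun w => ρ t w ^ ((β + 1) / 2))) y)) x) := by
    intro x
    have h1' : fderiv ℝ (fun q : ℝ × ℝ => ρ q.1 q.2) (t, x) ((1:ℝ), (0:ℝ))
        = deriv (fun s => ρ s x) t := ((hdts t x).deriv).symm
    have h2 : deriv (fun s => ρ s x) t = - deriv (fun y => ρ t y *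
        deriv (fun z => deriv (fun w => ρ t w ^ β * deriv (ρ t) w) z
          - β / 2 * ρ t z ^ (β - 1) * (deriv (ρ t) z) ^ 2) y) x := by
      have := hpde t x
      linarith
    have h3 : (fun y => ρ t y * deriv (fun z =>
          deriv (fun w => ρ t w ^ β * deriv (ρ t) w) z
            - β / 2 * ρ t z ^ (β - 1) * (deriv (ρ t) z) ^ 2) y)
        = fun y => 2 / (β + 1) * deriv (fun y' => ρ t y' ^ ((β + 3) / 2)
            * deriv (deriv (fun w => ρ t w ^ ((β + 1) / 2))) y') y :=
      funext fun y => key_id β hβ1' (ρ t) hrt hrpos y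
    rw [hg_def]
    show 4 / ((β + 3) * (β + 1)) * (_ * ((β + 3) / 2) * ρ t x ^ ((β + 3) / 2 - 1)) = _
    rw [h1', h2, h3, deriv_const_mul_field,
      show (β + 3) / 2 - 1 = (β + 1) / 2 by ring]
    field_simp
  simp only [hg_eq]
  rw [intervalIntegral.integral_const_mul]
  -- integration by parts twice
  have I1 := ibp_per (fun y => ρ t y ^ ((β + 1) / 2))
    (deriv (fun y => ρ t y ^ ((β + 3) / 2)
      * deriv (deriv (fun w => ρ t w ^ ((β + 1) / 2))) y)) hu hH1 pu pH1
  have I2 := ibp_per (deriv (fun y => ρ t y ^ ((β + 1) / 2)))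
    (fun y => ρ t y ^ ((β + 3) / 2)
      * deriv (deriv (fun w => ρ t w ^ ((β + 1) / 2))) y) hu1 hH pu1 pH
  have I3 : (∫ x in (0:ℝ)..1, deriv (deriv (fun y => ρ t y ^ ((β + 1) / 2))) x
        * (ρ t x ^ ((β + 3) / 2) * deriv (deriv (fun w => ρ t w ^ ((β + 1) / 2))) x))
      = ∫ x in (0:ℝ)..1, ρ t x ^ ((β + 3) / 2)
          * (deriv (deriv (fun y => ρ t y ^ ((β + 1) / 2))) x) ^ 2 := by
    apply intervalIntegral.integral_congr
    intro x _
    dsimp only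
    ring
  rw [I1, I2, neg_neg, I3]
  ring
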